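/- arXiv:2511.22514 — 4 statements merged into one kernel-verified Lean document; each statement's English description precedes it below -/
import Mathlib

section
/- For a word w over the ordered alphabet {1,...,n} and for 1 ≤ p ≤ q ≤ n, let w_{p,q} denote the maximum length of a weakly increasing subsequence of w all of whose letters lie in the interval [p,q]. Then for any two words u, v over {1,...,n}, (uv)_{p,q} = max over p ≤ r ≤ q of (u_{p,r} + v_{r,q}). -/
/-!
A weakly increasing subsequence of `u ++ v` with letters in `[p, q]` is one of `u` followed by
one of `v`; taking `r` to be the largest letter drawn from `u` (or `p` if there is none), the two
parts have letters in `[p, r]` and `[r, q]`. Conversely, two such subsequences glue at the common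
threshold `r` into a weakly increasing subsequence of `u ++ v`.
-/

/-- The maximum length of a weakly increasing subsequence of `w` all of whose
letters lie in the interval `[p, q]`. -/
def wis (w : List ℕ) (p q : ℕ) : ℕ :=
  ((w.sublists.filter (fun s => decide (s.Pairwise (· ≤ ·) ∧ ∀ a ∈ s, p ≤ a ∧ a ≤ q))).map
    List.length).foldr max 0

def IsWeaklyIncreasingIn (p q : ℕ) (s : List ℕ) : Prop :=
  s.Pairwise (· ≤ ·) ∧ ∀ a ∈ s, p ≤ a ∧ a ≤ q

namespace IsWeaklyIncreasingIn

variable {p q r : ℕ} {s t : List ℕ}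

theorem append (hs : IsWeaklyIncreasingIn p r s) (ht : IsWeaklyIncreasingIn r q t)
    (hpr : p ≤ r) (hrq : r ≤ q) : IsWeaklyIncreasingIn p q (s ++ t) := by
  refine ⟨List.pairwise_append.2 ⟨hs.1, ht.1, fun a ha b hb => (hs.2 a ha).2.trans (ht.2 b hb).1⟩,
    fun a ha => ?_⟩
  rcases List.mem_append.1 ha with ha | ha
  · exact ⟨(hs.2 a ha).1, (hs.2 a ha).2.trans hrq⟩
  · exact ⟨hpr.trans (ht.2 a ha).1, (ht.2 a ha).2⟩

theorem exists_split (h : IsWeaklyIncreasingIn p q (s ++ t)) (hpq : p ≤ q) :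
    ∃ r ∈ Finset.Icc p q, IsWeaklyIncreasingIn p r s ∧ IsWeaklyIncreasingIn r q t := by
  obtain ⟨hs, ht, hst⟩ := List.pairwise_append.1 h.1
  have hbs (a) (ha : a ∈ s) := h.2 a (List.mem_append_left t ha)
  have hbt (b) (hb : b ∈ t) := h.2 b (List.mem_append_right s hb)
  refine ⟨max p (s.foldr max ⊥), Finset.mem_Icc.2 ⟨le_max_left _ _, ?_⟩,
    ⟨hs, fun a ha => ⟨(hbs a ha).1, le_max_of_le_right (List.le_max_of_le ha le_rfl)⟩⟩,
    ⟨ht, fun b hb => ⟨?_, (hbt b hb).2⟩⟩⟩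
  · exact max_le hpq (List.max_le_of_forall_le _ _ fun a ha => (hbs a ha).2)
  · exact max_le (hbt b hb).1 (List.max_le_of_forall_le _ _ fun a ha => hst a ha b hb)

end IsWeaklyIncreasingIn

theorem mem_wisLengths_iff {w : List ℕ} {p q k : ℕ} :
    k ∈ (w.sublists.filter (fun s => decide (s.Pairwise (· ≤ ·) ∧ ∀ a ∈ s, p ≤ a ∧ a ≤ q))).map
      List.length ↔ ∃ s, s.Sublist w ∧ IsWeaklyIncreasingIn p q s ∧ s.length = k := by
  simp only [List.mem_map, List.mem_filter, List.mem_sublists, decide_eq_true_eq,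
    IsWeaklyIncreasingIn, and_assoc]

theorem length_le_wis {w s : List ℕ} {p q : ℕ} (hsw : s.Sublist w)
    (hs : IsWeaklyIncreasingIn p q s) : s.length ≤ wis w p q :=
  List.le_max_of_le (mem_wisLengths_iff.2 ⟨s, hsw, hs, rfl⟩) le_rfl

theorem exists_sublist_length_eq_wis (w : List ℕ) (p q : ℕ) :
    ∃ s, s.Sublist w ∧ IsWeaklyIncreasingIn p q s ∧ s.length = wis w p q := by
  have hne := List.ne_nil_of_mem
    (mem_wisLengths_iff (p := p) (q := q).2 ⟨[], List.nil_sublist w, ⟨.nil, by simp⟩, rfl⟩)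
  exact mem_wisLengths_iff.1 (List.maximum_mem (List.foldr_max_of_ne_nil hne).symm)

theorem wis_append_le_sup (u v : List ℕ) {p q : ℕ} (hpq : p ≤ q) :
    wis (u ++ v) p q ≤ (Finset.Icc p q).sup (fun r => wis u p r + wis v r q) := by
  obtain ⟨st, hst, hinc, hlen⟩ := exists_sublist_length_eq_wis (u ++ v) p q
  obtain ⟨s, t, rfl, hsu, htv⟩ := List.sublist_append_iff.1 hst
  obtain ⟨r, hr, hs, ht⟩ := hinc.exists_split hpq
  calc wis (u ++ v) p q = s.length + t.length := by rw [← hlen, List.length_append]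
    _ ≤ wis u p r + wis v r q := add_le_add (length_le_wis hsu hs) (length_le_wis htv ht)
    _ ≤ _ := Finset.le_sup (f := fun r => wis u p r + wis v r q) hr

theorem wis_add_wis_le_wis_append (u v : List ℕ) {p q r : ℕ} (hpr : p ≤ r) (hrq : r ≤ q) :
    wis u p r + wis v r q ≤ wis (u ++ v) p q := by
  obtain ⟨s, hsu, hs, hslen⟩ := exists_sublist_length_eq_wis u p r
  obtain ⟨t, htv, ht, htlen⟩ := exists_sublist_length_eq_wis v r q
  rw [← hslen, ← htlen, ← List.length_append]
  exact length_le_wis (hsu.append htv) (hs.append ht hpr hrq)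

theorem stmt0_general (u v : List ℕ)
    (p q : ℕ) (hpq : p ≤ q) :
    wis (u ++ v) p q = (Finset.Icc p q).sup (fun r => wis u p r + wis v r q) :=
  le_antisymm (wis_append_le_sup u v hpq) <| Finset.sup_le fun _ hr =>
    wis_add_wis_le_wis_append u v (Finset.mem_Icc.1 hr).1 (Finset.mem_Icc.1 hr).2

theorem stmt0 (n : ℕ) (u v : List ℕ)
    (hu : ∀ a ∈ u, 1 ≤ a ∧ a ≤ n) (hv : ∀ a ∈ v, 1 ≤ a ∧ a ≤ n)
    (p q : ℕ) (hp : 1 ≤ p) (hpq : p ≤ q) (hq : q ≤ n) :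
    wis (u ++ v) p q = (Finset.Icc p q).sup (fun r => wis u p r + wis v r q) :=
  stmt0_general u v p q hpq
end

section
/- Let u be a word over {1,...,n} and for i = 1,...,n let u_{1,i} denote the maximum length of a weakly increasing subsequence of u with entries in {1,...,i}. If u is the row reading word of a semistandard Young tableau T (reading rows left-to-right, from top row to bottom row, where rows weakly increase left to right and columns strictly increase bottom to top), then u_{1,i} equals the number of entries of the bottom row of T that are at most i. -/
/-!
A weakly increasing subsequence `s` of the reading word with letters `≤ i` splits as
`s₁ ++ s₂`, with `s₁` read from the rows above the bottom row `R` and `s₂` from `R`. If `x` is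
the last letter of `s₁`, induction on the number of rows bounds `|s₁|` by the number of entries
`≤ x` of the second row, which by column strictness is at most the number of entries `< x` of
`R`; and `s₂` consists of entries of `R` in `[x, i]`. Hence `|s| ≤ #{a ∈ R | a ≤ i}`, and the
entries `≤ i` of `R` form such a subsequence themselves.
-/

open List

lemma le_wis {w s : List ℕ} {p q : ℕ} (hs : s <+ w) (hsorted : s.Pairwise (· ≤ ·))
    (hbound : ∀ a ∈ s, p ≤ a ∧ a ≤ q) : s.length ≤ wis w p q :=
  le_max_of_le' 0 (mem_map.mpr ⟨s, mem_filter.mpr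
    ⟨mem_sublists.mpr hs, decide_eq_true ⟨hsorted, hbound⟩⟩, rfl⟩) le_rfl

lemma wis_le {w : List ℕ} {p q N : ℕ}
    (h : ∀ s, s <+ w → s.Pairwise (· ≤ ·) → (∀ a ∈ s, p ≤ a ∧ a ≤ q) → s.length ≤ N) :
    wis w p q ≤ N := by
  refine max_le_of_forall_le _ N ?_
  simp only [mem_map, mem_filter, mem_sublists, decide_eq_true_eq]
  rintro _ ⟨s, ⟨hs, hsorted, hbound⟩, rfl⟩
  exact h s hs hsorted hbound

lemma List.Sublist.length_le_length_filter {α : Type*} {s l : List α} {p : α → Bool}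
    (h : s <+ l) (hp : ∀ a ∈ s, p a) : s.length ≤ (l.filter p).length := by
  simpa [filter_eq_self.mpr hp] using (h.filter p).length_le

lemma length_filter_add_length_filter_le {α : Type*} (l : List α) {p q r : α → Bool}
    (hp : ∀ a, p a → r a) (hq : ∀ a, q a → r a) (hpq : ∀ a, p a → ¬ q a) :
    (l.filter p).length + (l.filter q).length ≤ (l.filter r).length := by
  induction l with
  | nil => simp
  | cons a l ih =>
    simp only [filter_cons]
    grind

def ColumnStrict (lower upper : List ℕ) : Prop :=
  upper.length ≤ lower.length ∧ ∀ j < upper.length, lower.getD j 0 < upper.getD j 0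

lemma columnStrict_cons_cons {a b : ℕ} {l u : List ℕ} :
    ColumnStrict (a :: l) (b :: u) ↔ a < b ∧ ColumnStrict l u := by
  simp only [ColumnStrict, length_cons, Nat.forall_lt_succ_left, getD_cons_zero,
    getD_cons_succ, Nat.succ_le_succ_iff]
  tauto

-- The entries `≤ x` of the sorted row `upper` form a prefix, and the entries below them
-- are `< x`.
lemma ColumnStrict.length_filter_le_le_length_filter_lt {lower upper : List ℕ}
    (hsorted : upper.Pairwise (· ≤ ·)) (h : ColumnStrict lower upper) (x : ℕ) :
    (upper.filter (· ≤ x)).length ≤ (lower.filter (· < x)).length := by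
  induction upper generalizing lower with
  | nil => simp
  | cons b u ih =>
    obtain _ | ⟨a, l⟩ := lower
    · simp [ColumnStrict] at h
    obtain ⟨hab, h⟩ := columnStrict_cons_cons.mp h
    by_cases hbx : b ≤ x
    · simpa [filter_cons, hbx, lt_of_lt_of_le hab hbx] using ih hsorted.of_cons h
    · have : (b :: u).filter (· ≤ x) = [] :=
        filter_eq_nil_iff.mpr fun c hc => by grind [pairwise_cons]
      simp [this]

lemma isChain_columnStrict {rows : List (List ℕ)}
    (hlen : (rows.map length).IsChain (fun a b => b ≤ a))
    (hcol : ∀ i j : ℕ, j < (rows.getD (i + 1) []).length →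
      (rows.getD i []).getD j 0 < (rows.getD (i + 1) []).getD j 0) :
    rows.IsChain ColumnStrict := by
  induction rows with
  | nil => exact .nil
  | cons R rest ih =>
    have hrest := ih hlen.tail fun i j hj => hcol (i + 1) j hj
    cases rest with
    | nil => exact isChain_singleton R
    | cons R1 rest =>
      have hR1 : ColumnStrict R R1 := ⟨(isChain_cons_cons.mp hlen).1, fun j hj => hcol 0 j hj⟩
      exact isChain_cons_cons.mpr ⟨hR1, hrest⟩

lemma length_le_length_filter_of_sublist_append {u lower upper : List ℕ}
    (hupper : upper.Pairwise (· ≤ ·)) (hcs : ColumnStrict lower upper)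
    (hu : ∀ s x, s <+ u → s.Pairwise (· ≤ ·) → (∀ a ∈ s, a ≤ x) →
      s.length ≤ (upper.filter (· ≤ x)).length)
    {s : List ℕ} {i : ℕ} (hs : s <+ u ++ lower) (hsorted : s.Pairwise (· ≤ ·))
    (hi : ∀ a ∈ s, a ≤ i) : s.length ≤ (lower.filter (· ≤ i)).length := by
  obtain ⟨s₁, s₂, rfl, hs₁, hs₂⟩ := sublist_append_iff.mp hs
  rcases s₁.eq_nil_or_concat with rfl | ⟨t, x, rfl⟩
  · simpa using hs₂.length_le_length_filter (p := (· ≤ i)) (by simpa using hi)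
  rw [concat_eq_append] at hs₁ hsorted ⊢
  rw [pairwise_append] at hsorted
  obtain ⟨hsorted₁, -, hx₂⟩ := hsorted
  have hx₁ : ∀ a ∈ t ++ [x], a ≤ x := by
    intro a ha
    rcases mem_append.mp ha with ha | ha
    · exact (pairwise_append.mp hsorted₁).2.2 a ha x (mem_singleton_self x)
    · exact (mem_singleton.mp ha).le
  have hxi : x ≤ i := hi x (by simp)
  calc (t ++ [x] ++ s₂).length = (t ++ [x]).length + s₂.length := length_append
    _ ≤ (upper.filter (· ≤ x)).length + (lower.filter (fun a => x ≤ a ∧ a ≤ i)).length :=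
        add_le_add (hu _ x hs₁ hsorted₁ hx₁) (hs₂.length_le_length_filter fun a ha => by
          simpa using ⟨hx₂ x (by simp) a ha, hi a (by simp [ha])⟩)
    _ ≤ (lower.filter (· < x)).length + (lower.filter (fun a => x ≤ a ∧ a ≤ i)).length :=
        Nat.add_le_add_right (hcs.length_filter_le_le_length_filter_lt hupper x) _
    _ ≤ (lower.filter (· ≤ i)).length :=
        length_filter_add_length_filter_le lower (by simp; omega) (by simp) (by simp; omega)

lemma length_le_length_filter_bottom_row {rows : List (List ℕ)}
    (hsorted : ∀ r ∈ rows, r.Pairwise (· ≤ ·)) (hcs : rows.IsChain ColumnStrict)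
    {s : List ℕ} {i : ℕ} (hs : s <+ rows.reverse.flatten) (hss : s.Pairwise (· ≤ ·))
    (hi : ∀ a ∈ s, a ≤ i) : s.length ≤ ((rows.getD 0 []).filter (· ≤ i)).length := by
  induction rows generalizing s i with
  | nil => simp_all
  | cons R rest ih =>
    obtain ⟨hR1sorted, hR1⟩ :
        (rest.getD 0 []).Pairwise (· ≤ ·) ∧ ColumnStrict R (rest.getD 0 []) := by
      cases rest with
      | nil => simp [ColumnStrict]
      | cons R1 _ => exact ⟨hsorted R1 (by simp), (isChain_cons_cons.mp hcs).1⟩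
    refine length_le_length_filter_of_sublist_append hR1sorted hR1
      (fun s x hs hss hx => ih (fun r hr => hsorted r (mem_cons_of_mem R hr)) hcs.tail hs hss hx)
      (by simpa using hs) hss hi

theorem stmt5_general (n : ℕ) (rows : List (List ℕ))
    -- rows of the tableau, listed from bottom to top; each row is nonempty,
    -- weakly increasing, with entries in {1, ..., n}
    (hrows : ∀ r ∈ rows, r ≠ [] ∧ r.Pairwise (· ≤ ·) ∧ ∀ a ∈ r, 1 ≤ a ∧ a ≤ n)
    -- row lengths weakly decrease from bottom to top
    (hlen : List.Chain' (fun a b => b ≤ a) (rows.map List.length))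
    -- columns strictly increase from bottom to top
    (hcol : ∀ i j : ℕ, j < (rows.getD (i + 1) []).length →
      (rows.getD i []).getD j 0 < (rows.getD (i + 1) []).getD j 0)
    (i : ℕ) :
    wis (rows.reverse.flatten) 1 i =
      ((rows.getD 0 []).filter (fun a => decide (a ≤ i))).length := by
  refine le_antisymm (wis_le fun s hs hss hb =>
    length_le_length_filter_bottom_row (fun r hr => (hrows r hr).2.1)
      (isChain_columnStrict hlen hcol) hs hss fun a ha => (hb a ha).2) ?_
  cases rows with
  | nil => simp
  | cons R rest =>
    obtain ⟨-, hR, hRbounds⟩ := hrows R mem_cons_self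
    refine le_wis ((filter_sublist).trans (by simp)) (hR.filter _) fun a ha => ?_
    simp only [mem_filter, decide_eq_true_eq] at ha
    exact ⟨(hRbounds a ha.1).1, ha.2⟩

theorem stmt5 (n : ℕ) (rows : List (List ℕ))
    -- rows of the tableau, listed from bottom to top; each row is nonempty,
    -- weakly increasing, with entries in {1, ..., n}
    (hrows : ∀ r ∈ rows, r ≠ [] ∧ r.Pairwise (· ≤ ·) ∧ ∀ a ∈ r, 1 ≤ a ∧ a ≤ n)
    -- row lengths weakly decrease from bottom to top
    (hlen : List.Chain' (fun a b => b ≤ a) (rows.map List.length))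
    -- columns strictly increase from bottom to top
    (hcol : ∀ i j : ℕ, j < (rows.getD (i + 1) []).length →
      (rows.getD i []).getD j 0 < (rows.getD (i + 1) []).getD j 0)
    (i : ℕ) (hi1 : 1 ≤ i) (hin : i ≤ n) :
    wis (rows.reverse.flatten) 1 i =
      ((rows.getD 0 []).filter (fun a => decide (a ≤ i))).length :=
  stmt5_general n rows hrows hlen hcol i
end

section
/- Let u = u_1...u_k be a word over {1,...,n} and let std(u) = u_1'...u_k' be its standardisation (a permutation word over {1,...,k}). Fix 1 ≤ p ≤ q ≤ n such that u contains at least one letter in [p,q], and set a = 1 + (number of letters of u strictly less than p) and b = k - (number of letters of u strictly greater than q). Then the maximum length of a weakly increasing subsequence of u with entries in [p,q] equals the maximum length of a strictly increasing subsequence of std(u) with entries in [a,b]. -/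
/-- The maximum length of a strictly increasing subsequence of `w` all of whose
letters lie in the interval `[p, q]`. -/
def sis (w : List ℕ) (p q : ℕ) : ℕ :=
  ((w.sublists.filter (fun s => decide (s.Pairwise (· < ·) ∧ ∀ a ∈ s, p ≤ a ∧ a ≤ q))).map
    List.length).foldr max 0

/-- The standardisation of a word: the j-th occurrence (left to right) of a letter c
is replaced by j plus the number of letters strictly smaller than c. -/
def stdWord (u : List ℕ) : List ℕ :=
  (List.range u.length).map
    (fun i => (u.take (i + 1)).count (u.getD i 0) + u.countP (fun a => decide (a < u.getD i 0)))

/-!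
Standardisation numbers the letters equal to `c` consecutively, left to right, inside the
interval `(#{letters < c}, #{letters ≤ c}]`. Hence for positions `i < j` we have
`u i ≤ u j ↔ std i < std j`, and `u i ∈ [p, q] ↔ std i ∈ [a, b]`. Reading `u` and `std u`
as the two coordinates of one list of pairs, a set of positions carries an admissible
subsequence of `u` exactly when it carries one of `std u`, so the two maxima agree.
-/

namespace List

variable {γ α β : Type*}

theorem exists_sublist_map_of_pairwise_imp {z : List γ} {f : γ → α} {g : γ → β}
    {R : α → α → Prop} {S : β → β → Prop} {P : α → Prop} {Q : β → Prop}
    (hRS : z.Pairwise fun x y => R (f x) (f y) → S (g x) (g y))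
    (hPQ : ∀ x ∈ z, P (f x) → Q (g x))
    {s : List α} (hs : s <+ z.map f) (hR : s.Pairwise R) (hP : ∀ a ∈ s, P a) :
    ∃ t, t <+ z.map g ∧ (t.Pairwise S ∧ ∀ b ∈ t, Q b) ∧ t.length = s.length := by
  obtain ⟨z', hz', rfl⟩ := sublist_map_iff.mp hs
  refine ⟨z'.map g, hz'.map g, ⟨?_, ?_⟩, by simp⟩
  · rw [pairwise_map] at hR ⊢
    exact ((hRS.sublist hz').and hR).imp fun ⟨h, hr⟩ => h hr
  · simp only [mem_map, forall_exists_index, and_imp, forall_apply_eq_imp_iff₂] at hP ⊢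
    exact fun x hx => hPQ x (hz'.subset hx) (hP x hx)

theorem countP_decide_mono {P Q : α → Prop} [DecidablePred P] [DecidablePred Q] (l : List α)
    (h : ∀ a, P a → Q a) : l.countP (fun a => decide (P a)) ≤ l.countP (fun a => decide (Q a)) :=
  countP_mono_left fun a _ ha => decide_eq_true (h a (of_decide_eq_true ha))

theorem foldr_max_length_filter_sublists_le {v : List α} {w : List β}
    {C : List α → Prop} {D : List β → Prop} [DecidablePred C] [DecidablePred D]
    (h : ∀ s, s <+ v → C s → ∃ t, t <+ w ∧ D t ∧ t.length = s.length) :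
    ((v.sublists.filter fun s => decide (C s)).map length).foldr max 0 ≤
      ((w.sublists.filter fun t => decide (D t)).map length).foldr max 0 := by
  refine max_le_of_forall_le _ _ fun n hn => ?_
  obtain ⟨s, hs, rfl⟩ := mem_map.mp hn
  rw [mem_filter, mem_sublists, decide_eq_true_iff] at hs
  obtain ⟨t, ht, hD, hlen⟩ := h s hs.1 hs.2
  exact le_max_of_le' 0 (mem_map_of_mem (mem_filter.mpr ⟨mem_sublists.mpr ht, by simpa⟩))
    hlen.ge

theorem foldr_max_length_filter_sublists_map_eq {z : List γ} {f : γ → α} {g : γ → β}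
    {R : α → α → Prop} {S : β → β → Prop} {P : α → Prop} {Q : β → Prop}
    [DecidableRel R] [DecidableRel S] [DecidablePred P] [DecidablePred Q]
    (hRS : z.Pairwise fun x y => R (f x) (f y) ↔ S (g x) (g y))
    (hPQ : ∀ x ∈ z, P (f x) ↔ Q (g x)) :
    (((z.map f).sublists.filter fun s => decide (s.Pairwise R ∧ ∀ a ∈ s, P a)).map
      length).foldr max 0 =
    (((z.map g).sublists.filter fun t => decide (t.Pairwise S ∧ ∀ b ∈ t, Q b)).map
      length).foldr max 0 :=
  le_antisymm
    (foldr_max_length_filter_sublists_le fun _ hs ⟨hR, hP⟩ =>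
      exists_sublist_map_of_pairwise_imp (hRS.imp Iff.mp) (fun x hx => (hPQ x hx).mp) hs hR hP)
    (foldr_max_length_filter_sublists_le fun _ hs ⟨hS, hQ⟩ =>
      exists_sublist_map_of_pairwise_imp (hRS.imp Iff.mpr) (fun x hx => (hPQ x hx).mpr) hs hS hQ)

end List

section Standardisation

variable (u : List ℕ)

theorem length_stdWord : (stdWord u).length = u.length := by
  simp [stdWord]

theorem getElem_stdWord {i : ℕ} (hi : i < (stdWord u).length) :
    (stdWord u)[i] = (u.take (i + 1)).count (u[i]'(length_stdWord u ▸ hi)) +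
      u.countP (· < u[i]'(length_stdWord u ▸ hi)) := by
  have hi' : i < u.length := length_stdWord u ▸ hi
  simp [stdWord, List.getElem?_eq_getElem hi']

theorem countP_le_eq_countP_lt_add_count (c : ℕ) :
    u.countP (· ≤ c) = u.countP (· < c) + u.count c := by
  induction u with
  | nil => rfl
  | cons a u ih =>
    simp only [List.countP_cons, List.count_cons, ih, beq_iff_eq, decide_eq_true_eq]
    split_ifs <;> omega

theorem countP_lt_lt_getElem_stdWord {i : ℕ} (hi : i < (stdWord u).length) :
    u.countP (· < u[i]'(length_stdWord u ▸ hi)) < (stdWord u)[i] := by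
  have hi' : i < u.length := length_stdWord u ▸ hi
  have : 0 < (u.take (i + 1)).count u[i] :=
    List.count_pos_iff.mpr <|
      List.mem_iff_getElem.mpr ⟨i, by rw [List.length_take]; omega, List.getElem_take⟩
  rw [getElem_stdWord]
  omega

theorem getElem_stdWord_le_countP_le {i : ℕ} (hi : i < (stdWord u).length) :
    (stdWord u)[i] ≤ u.countP (· ≤ u[i]'(length_stdWord u ▸ hi)) := by
  rw [getElem_stdWord, countP_le_eq_countP_lt_add_count]
  have := (u.take_sublist (i + 1)).count_le (u[i]'(length_stdWord u ▸ hi))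
  omega

theorem getElem_stdWord_lt_of_lt {i j : ℕ} (hi : i < (stdWord u).length)
    (hj : j < (stdWord u).length)
    (h : u[i]'(length_stdWord u ▸ hi) < u[j]'(length_stdWord u ▸ hj)) :
    (stdWord u)[i] < (stdWord u)[j] :=
  calc (stdWord u)[i] ≤ u.countP (· ≤ u[i]'(length_stdWord u ▸ hi)) :=
        getElem_stdWord_le_countP_le u hi
    _ ≤ u.countP (· < u[j]'(length_stdWord u ▸ hj)) :=
        List.countP_decide_mono u fun _ ha => ha.trans_lt h
    _ < (stdWord u)[j] := countP_lt_lt_getElem_stdWord u hj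

theorem getElem_stdWord_lt_of_eq {i j : ℕ} (hij : i < j) (hj : j < (stdWord u).length)
    (h : u[i]'(hij.trans (length_stdWord u ▸ hj)) = u[j]'(length_stdWord u ▸ hj)) :
    (stdWord u)[i]'(hij.trans hj) < (stdWord u)[j] := by
  have hj' : j < u.length := length_stdWord u ▸ hj
  have hprefix : (u.take (i + 1)).count u[j] ≤ (u.take j).count u[j] :=
    (List.take_prefix_take_left (by omega)).sublist.count_le _
  have hnext : (u.take (j + 1)).count u[j] = (u.take j).count u[j] + 1 := by
    rw [← List.take_concat_get' u j hj', List.count_append]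
    simp
  rw [getElem_stdWord, getElem_stdWord, h]
  omega

theorem pairwise_zip_stdWord :
    (u.zip (stdWord u)).Pairwise fun x y => x.1 ≤ y.1 ↔ x.2 < y.2 := by
  rw [List.pairwise_iff_getElem]
  intro i j hi hj hij
  simp only [List.getElem_zip]
  constructor
  · intro hle
    rcases hle.eq_or_lt with heq | hlt
    · exact getElem_stdWord_lt_of_eq u hij _ heq
    · exact getElem_stdWord_lt_of_lt u _ _ hlt
  · intro hlt
    by_contra! hgt
    exact (getElem_stdWord_lt_of_lt u _ _ hgt).not_gt hlt

theorem bounds_of_mem_zip_stdWord {x : ℕ × ℕ} (hx : x ∈ u.zip (stdWord u)) :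
    u.countP (· < x.1) < x.2 ∧ x.2 ≤ u.countP (· ≤ x.1) := by
  obtain ⟨i, hi, rfl⟩ := List.mem_iff_getElem.mp hx
  simp only [List.getElem_zip]
  exact ⟨countP_lt_lt_getElem_stdWord u _, getElem_stdWord_le_countP_le u _⟩

theorem mem_Icc_iff_of_mem_zip_stdWord {p q : ℕ} {x : ℕ × ℕ} (hx : x ∈ u.zip (stdWord u)) :
    (p ≤ x.1 ∧ x.1 ≤ q) ↔
      (1 + u.countP (· < p) ≤ x.2 ∧ x.2 ≤ u.length - u.countP (q < ·)) := by
  obtain ⟨hlo, hhi⟩ := bounds_of_mem_zip_stdWord u hx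
  have hp : p ≤ x.1 ↔ u.countP (· < p) < x.2 := by
    constructor
    · intro hp
      calc u.countP (· < p) ≤ u.countP (· < x.1) :=
            List.countP_decide_mono u fun _ ha => ha.trans_le hp
        _ < x.2 := hlo
    · intro hlt
      by_contra! hxp
      have : u.countP (· ≤ x.1) ≤ u.countP (· < p) :=
        List.countP_decide_mono u fun _ ha => ha.trans_lt hxp
      omega
  have hq : x.1 ≤ q ↔ x.2 ≤ u.countP (· ≤ q) := by
    constructor
    · intro hq
      calc x.2 ≤ u.countP (· ≤ x.1) := hhi
        _ ≤ u.countP (· ≤ q) := List.countP_decide_mono u fun _ ha => ha.trans hq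
    · intro hle
      by_contra! hqx
      have : u.countP (· ≤ q) ≤ u.countP (· < x.1) :=
        List.countP_decide_mono u fun _ ha => ha.trans_lt hqx
      omega
  have hcompl : u.length - u.countP (q < ·) = u.countP (· ≤ q) := by
    rw [List.length_eq_countP_add_countP (· ≤ q)]
    simp
  rw [hp, hq, hcompl, Nat.one_add_le_iff]

end Standardisation

theorem stmt10_general (u : List ℕ) (p q : ℕ) :
    wis u p q =
      sis (stdWord u) (1 + u.countP (fun a => decide (a < p)))
        (u.length - u.countP (fun a => decide (q < a))) := by
  unfold wis sis
  conv_lhs => rw [← List.map_fst_zip (l₂ := stdWord u) (length_stdWord u).ge]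
  conv_rhs => rw [← List.map_snd_zip (l₁ := u) (length_stdWord u).le]
  exact List.foldr_max_length_filter_sublists_map_eq (pairwise_zip_stdWord u)
    fun _ hx => mem_Icc_iff_of_mem_zip_stdWord u hx

theorem stmt10 (n : ℕ) (u : List ℕ) (hu : ∀ a ∈ u, 1 ≤ a ∧ a ≤ n)
    (p q : ℕ) (hp : 1 ≤ p) (hpq : p ≤ q) (hq : q ≤ n)
    (hex : ∃ a ∈ u, p ≤ a ∧ a ≤ q) :
    wis u p q =
      sis (stdWord u) (1 + u.countP (fun a => decide (a < p)))
        (u.length - u.countP (fun a => decide (q < a))) :=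
  stmt10_general u p q
end

section
/- Let w be a standard word of length k (a permutation of {1,...,k} written as a word). Define the charge sequence chseq(w) of length k by chseq(w)_1 = 0 and, for i ≥ 2, chseq(w)_i = chseq(w)_{i-1} if i occurs to the left of i-1 in w, and chseq(w)_i = chseq(w)_{i-1} + 1 if i occurs to the right of i-1 in w. If u and v are standard words of length k with u_{p,q} = v_{p,q} for all 1 ≤ p ≤ q ≤ k (where x_{p,q} is the maximum length of a weakly increasing subsequence of x with entries in [p,q]), then chseq(u) = chseq(v). -/
/-- The charge sequence of a standard word: \`chseq w i\` is the i-th entry (for 1 ≤ i). -/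
def chseq (w : List ℕ) : ℕ → ℕ
  | 0 => 0
  | 1 => 0
  | (i + 2) => chseq w (i + 1) + (if w.idxOf (i + 1) < w.idxOf (i + 2) then 1 else 0)

/-
The charge sequence only records, for each `j`, whether `j` occurs before `j + 1`. In a word
without repeated letters this is visible in `wis w j (j + 1)`: a weakly increasing subsequence with
letters in `{j, j + 1}` is strictly increasing, so it has length 2 exactly when it is `[j, j + 1]`,
which is a subsequence exactly when `j` precedes `j + 1`.
-/

open List

theorem List.Nodup.pair_sublist_iff_idxOf_lt {α : Type*} [BEq α] [LawfulBEq α] {a b : α} :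
    ∀ {w : List α}, w.Nodup → b ∈ w → ([a, b] <+ w ↔ w.idxOf a < w.idxOf b)
  | [], _, hb => by simp at hb
  | c :: t, hw, hb => by
    obtain ⟨hct, ht⟩ := List.nodup_cons.mp hw
    rw [List.sublist_cons_iff]
    rcases List.mem_cons.mp hb with rfl | hbt
    · have : ¬[a, b] <+ t := fun h => hct (h.subset (by simp))
      simp [this, hct]
    · have hbc : b ≠ c := by rintro rfl; exact hct hbt
      by_cases hac : a = c
      · subst hac
        simp [hbt, List.idxOf_cons_ne _ (Ne.symm hbc)]
      · rw [List.idxOf_cons_ne _ (Ne.symm hac), List.idxOf_cons_ne _ (Ne.symm hbc),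
          Nat.succ_lt_succ_iff, ← pair_sublist_iff_idxOf_lt ht hbt]
        simp [hac]

theorem wis_le_iff {w : List ℕ} {p q n : ℕ} :
    wis w p q ≤ n ↔
      ∀ s, s <+ w → s.Pairwise (· ≤ ·) → (∀ a ∈ s, p ≤ a ∧ a ≤ q) → s.length ≤ n := by
  have foldr_max_le_iff : ∀ l : List ℕ, l.foldr max 0 ≤ n ↔ ∀ x ∈ l, x ≤ n := by
    intro l; induction l <;> simp [*]
  simp only [wis, foldr_max_le_iff, mem_map, mem_filter, mem_sublists, decide_eq_true_eq]
  exact ⟨fun h s hs hsorted hrange => h _ ⟨s, ⟨hs, hsorted, hrange⟩, rfl⟩,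
    fun h _ ⟨s, ⟨hs, hsorted, hrange⟩, hlen⟩ => hlen ▸ h s hs hsorted hrange⟩

theorem two_le_wis_succ_iff {w : List ℕ} (hw : w.Nodup) {p : ℕ} (hp : p + 1 ∈ w) :
    2 ≤ wis w p (p + 1) ↔ w.idxOf p < w.idxOf (p + 1) := by
  rw [← hw.pair_sublist_iff_idxOf_lt hp, ← not_lt, Nat.lt_succ_iff, wis_le_iff]
  push Not
  constructor
  · rintro ⟨_ | ⟨a, _ | ⟨b, r⟩⟩, hs, hsorted, hrange, hlen⟩
    · simp at hlen
    · simp at hlen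
    · have hab : a ≤ b := List.rel_of_pairwise_cons hsorted (by simp)
      have hne : a ≠ b := by
        rintro rfl; exact (List.nodup_cons.mp (hs.nodup hw)).1 (by simp)
      have ha := hrange a (by simp)
      have hb := hrange b (by simp)
      obtain ⟨rfl, rfl⟩ : a = p ∧ b = p + 1 := by omega
      exact (sublist_append_left _ r).trans hs
  · intro h
    exact ⟨[p, p + 1], h, by simp, by simp, by simp⟩

theorem chseq_eq_of_forall_idxOf_lt_iff {u v : List ℕ} {k : ℕ}
    (h : ∀ j, 1 ≤ j → j + 1 ≤ k →
      (u.idxOf j < u.idxOf (j + 1) ↔ v.idxOf j < v.idxOf (j + 1))) :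
    ∀ i ≤ k, chseq u i = chseq v i
  | 0, _ => rfl
  | 1, _ => rfl
  | i + 2, hi => by
    simp only [chseq, chseq_eq_of_forall_idxOf_lt_iff h (i + 1) (by omega),
      h (i + 1) (by omega) hi]

theorem stmt12 (k : ℕ) (u v : List ℕ)
    (hu : u.Perm (List.range' 1 k)) (hv : v.Perm (List.range' 1 k))
    (h : ∀ p q : ℕ, 1 ≤ p → p ≤ q → q ≤ k → wis u p q = wis v p q) :
    ∀ i : ℕ, 1 ≤ i → i ≤ k → chseq u i = chseq v i := by
  refine fun i _ hi => chseq_eq_of_forall_idxOf_lt_iff (fun j hj hjk => ?_) i hi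
  have mem_of_perm {w : List ℕ} (hw : w.Perm (List.range' 1 k)) : j + 1 ∈ w :=
    hw.mem_iff.mpr (List.mem_range'_1.mpr (by omega))
  rw [← two_le_wis_succ_iff (hu.nodup_iff.mpr List.nodup_range') (mem_of_perm hu),
    ← two_le_wis_succ_iff (hv.nodup_iff.mpr List.nodup_range') (mem_of_perm hv),
    h j (j + 1) hj (by omega) hjk]
end
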